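/- Let G be a locally finite graph, r a positive integer, X_0 a finite set of vertices, and {W_k : k ≥ 1} a sequence of vertex sets; define X_n for n > 0 as the set of vertices connected to a vertex of X_{n-1} by a path of length at most r containing no vertex of W_1 ∪ ... ∪ W_n. Then there exists N > 0 with X_n = X_N for every n ≥ N if and only if there exists N > 0 with X_n ⊆ B_G(X_0, rN) for every n ≥ 0. -/

import Mathlib

open SimpleGraph

namespace Firefighter

variable {V : Type*}

/-- The set of vertices on fire at time `n`, starting from initial fire `X0`, with fire spreading
along paths of length at most `r` avoiding the protected sets `W 1, ..., W n`. -/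
def fireSet (G : SimpleGraph V) (r : ℕ) (X0 : Set V) (W : ℕ → Set V) : ℕ → Set V
  | 0 => X0
  | n + 1 => {v | ∃ u ∈ fireSet G r X0 W n, ∃ p : G.Walk u v, p.length ≤ r ∧
      ∀ w ∈ p.support, ∀ i, 1 ≤ i → i ≤ n + 1 → w ∉ W i}

/-- `W` is an `(f, r)`-containment strategy for the initial fire `X0` in `G`. -/
def IsContainmentStrategy (G : SimpleGraph V) (r : ℕ) (f : ℕ → ℕ)
    (X0 : Set V) (W : ℕ → Set V) : Prop :=
  (∀ n, 1 ≤ n → (W n).Finite ∧ (W n).ncard ≤ f n) ∧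
  (∀ n, Disjoint (fireSet G r X0 W n) (W (n + 1))) ∧
  (∃ N, 0 < N ∧ ∀ n, N ≤ n → fireSet G r X0 W n = fireSet G r X0 W N)

/-- `G` has the `(f, r)`-containment property. -/
def HasContainmentProperty (G : SimpleGraph V) (r : ℕ) (f : ℕ → ℕ) : Prop :=
  ∀ X0 : Set V, X0.Finite → ∃ W : ℕ → Set V, IsContainmentStrategy G r f X0 W

/-- A graph is locally finite if every vertex has finitely many neighbors. -/
def LocallyFiniteGraph (G : SimpleGraph V) : Prop := ∀ v, (G.neighborSet v).Finite

/-- The ball of radius `n` about the vertex `g0` (in the combinatorial metric). -/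
def ball (G : SimpleGraph V) (g0 : V) (n : ℕ) : Set V :=
  {v | G.Reachable g0 v ∧ G.dist g0 v ≤ n}

/-- The sphere of radius `n` about the vertex `g0` (in the combinatorial metric). -/
def sphere (G : SimpleGraph V) (g0 : V) (n : ℕ) : Set V :=
  {v | G.Reachable g0 v ∧ G.dist g0 v = n}

/-- For `T` a subset of the sphere of radius `n`, `nextAdj G g0 n T` is the set `T*` of vertices
of the sphere of radius `n+1` adjacent to at least one vertex of `T`. -/
def nextAdj (G : SimpleGraph V) (g0 : V) (n : ℕ) (T : Set V) : Set V :=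
  {v ∈ sphere G g0 (n + 1) | ∃ u ∈ T, G.Adj u v}

/-- A graph has bounded degree if there is a uniform finite bound on vertex degrees. -/
def BoundedDegree (G : SimpleGraph V) : Prop :=
  ∃ D : ℕ, ∀ v, (G.neighborSet v).Finite ∧ (G.neighborSet v).ncard ≤ D

/-- Two graphs are quasi-isometric. -/
def QuasiIsometric {V' : Type*} (G : SimpleGraph V) (H : SimpleGraph V') : Prop :=
  ∃ c : ℕ, 1 ≤ c ∧ ∃ (φ : V → V') (ψ : V' → V),
    (∀ g1 g2, H.dist (φ g1) (φ g2) ≤ c * G.dist g1 g2 + c) ∧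
    (∀ h1 h2, G.dist (ψ h1) (ψ h2) ≤ c * H.dist h1 h2 + c) ∧
    (∀ g, G.dist g (ψ (φ g)) ≤ c) ∧
    (∀ h, H.dist h (φ (ψ h)) ≤ c)

/-- `f ≼ g` : there is `c > 0` with `f n ≤ c * g (c*n + c) + c` for all `n ≥ c`. -/
def Preceq (f g : ℕ → ℕ) : Prop :=
  ∃ c : ℕ, 0 < c ∧ ∀ n, c ≤ n → f n ≤ c * g (c * n + c) + c

/-- `f` and `g` have equivalent asymptotic growth. -/
def AsympEquiv (f g : ℕ → ℕ) : Prop := Preceq f g ∧ Preceq g f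

/-- The ball of radius `n` about a set `X` of vertices. -/
def ballSet (G : SimpleGraph V) (X : Set V) (n : ℕ) : Set V :=
  {v | ∃ u ∈ X, ∃ p : G.Walk u v, p.length ≤ n}

/-!
The fire at time `n` lies in `B_G(X_0, rn)`, which gives the forward direction. Conversely, suppose
the fire stays in the ball `B = B_G(X_0, rN)`, which is finite by local finiteness. The traces of
`W_1 ∪ ⋯ ∪ W_n` on `B` increase, so they are constant from some time `M` on. After that, a burning
vertex lies in `B` and outside `W_1 ∪ ⋯ ∪ W_n`, hence outside `W_{n+1}`, so it keeps burning: the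
fire is increasing, and an increasing sequence of subsets of a finite set is eventually constant.
-/

theorem exists_forall_ge_eq_of_monotone_of_subset_finite {α : Type*} {A : ℕ → Set α}
    {B : Set α} (hB : B.Finite) (hA : Monotone A) (hAB : ∀ n, A n ⊆ B) :
    ∃ N, ∀ n, N ≤ n → A n = A N := by
  have hrange : (Set.range A).Finite :=
    hB.finite_subsets.subset (Set.range_subset_iff.2 hAB)
  obtain ⟨_, ⟨N, rfl⟩, hmax⟩ := hrange.exists_maximal (Set.range_nonempty A)
  exact ⟨N, fun n hn => (hmax ⟨n, rfl⟩ (hA hn)).antisymm (hA hn)⟩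

section

variable (G : SimpleGraph V)

lemma ballSet_mono (X : Set V) {m n : ℕ} (h : m ≤ n) : ballSet G X m ⊆ ballSet G X n := by
  rintro v ⟨u, hu, p, hp⟩
  exact ⟨u, hu, p, hp.trans h⟩

lemma ballSet_zero (X : Set V) : ballSet G X 0 = X := by
  ext v
  constructor
  · rintro ⟨u, hu, p, hp⟩
    rwa [← Walk.eq_of_length_eq_zero (Nat.le_zero.mp hp)]
  · exact fun hv => ⟨v, hv, Walk.nil, le_rfl⟩

lemma ballSet_succ_subset (X : Set V) (n : ℕ) :
    ballSet G X (n + 1) ⊆ ballSet G (X ∪ ⋃ u ∈ X, G.neighborSet u) n := by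
  rintro v ⟨u, hu, p, hp⟩
  cases p with
  | nil => exact ⟨v, Or.inl hu, Walk.nil, Nat.zero_le n⟩
  | cons h q => exact ⟨_, Or.inr (Set.mem_biUnion hu h), q, by simpa using hp⟩

lemma ballSet_finite (hG : LocallyFiniteGraph G) {X : Set V} (hX : X.Finite) (n : ℕ) :
    (ballSet G X n).Finite := by
  induction n generalizing X with
  | zero => rwa [ballSet_zero]
  | succ n ih =>
    exact (ih (hX.union (hX.biUnion fun u _ => hG u))).subset (ballSet_succ_subset G X n)

variable (r : ℕ) (X0 : Set V) (W : ℕ → Set V)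

lemma fireSet_subset_ballSet (n : ℕ) : fireSet G r X0 W n ⊆ ballSet G X0 (r * n) := by
  induction n with
  | zero => simp [fireSet, ballSet_zero]
  | succ n ih =>
    rintro v ⟨u, hu, q, hq, -⟩
    obtain ⟨u0, hu0, p, hp⟩ := ih hu
    refine ⟨u0, hu0, p.append q, ?_⟩
    rw [Walk.length_append, Nat.mul_succ]
    exact Nat.add_le_add hp hq

lemma notMem_of_mem_fireSet {n : ℕ} {v : V} (hv : v ∈ fireSet G r X0 W n) {i : ℕ}
    (hi : 1 ≤ i) (hin : i ≤ n) : v ∉ W i := by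
  cases n with
  | zero => omega
  | succ n =>
    obtain ⟨u, -, p, -, hp⟩ := hv
    exact hp v p.end_mem_support i hi hin

lemma fireSet_subset_fireSet_succ {n : ℕ}
    (h : ∀ v ∈ fireSet G r X0 W n, v ∈ W (n + 1) → ∃ i, 1 ≤ i ∧ i ≤ n ∧ v ∈ W i) :
    fireSet G r X0 W n ⊆ fireSet G r X0 W (n + 1) := by
  intro v hv
  refine ⟨v, hv, Walk.nil, Nat.zero_le r, fun w hw i hi hin hwi => ?_⟩
  rw [Walk.support_nil, List.mem_singleton] at hw
  subst hw
  rcases hin.lt_or_eq with hin | rfl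
  · exact notMem_of_mem_fireSet G r X0 W hv hi (Nat.lt_succ_iff.mp hin) hwi
  · obtain ⟨j, hj, hjn, hwj⟩ := h w hv hwi
    exact notMem_of_mem_fireSet G r X0 W hv hj hjn hwj

lemma exists_monotone_fireSet_of_subset_finite {B : Set V} (hB : B.Finite)
    (hfire : ∀ n, fireSet G r X0 W n ⊆ B) :
    ∃ M, Monotone fun k => fireSet G r X0 W (M + k) := by
  let protectedIn (n : ℕ) : Set V := B ∩ {v | ∃ i, 1 ≤ i ∧ i ≤ n ∧ v ∈ W i}
  have hmono : Monotone protectedIn := fun m n hmn v ⟨hvB, i, hi, him, hvi⟩ =>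
    ⟨hvB, i, hi, him.trans hmn, hvi⟩
  obtain ⟨M, hM⟩ := exists_forall_ge_eq_of_monotone_of_subset_finite hB hmono
    fun n => Set.inter_subset_left
  refine ⟨M, monotone_nat_of_le_succ fun k => fireSet_subset_fireSet_succ G r X0 W ?_⟩
  intro v hv hvW
  have hv' : v ∈ protectedIn (M + k + 1) := ⟨hfire _ hv, M + k + 1, by omega, le_rfl, hvW⟩
  rw [hM _ (by omega), ← hM (M + k) (by omega)] at hv'
  exact hv'.2

end

theorem stmt11_general {V : Type*} (G : SimpleGraph V) (hlf : LocallyFiniteGraph G)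
    (r : ℕ) (X0 : Set V) (hX0 : X0.Finite) (W : ℕ → Set V) :
    (∃ N : ℕ, 0 < N ∧ ∀ n, N ≤ n → fireSet G r X0 W n = fireSet G r X0 W N) ↔
    (∃ N : ℕ, 0 < N ∧ ∀ n, fireSet G r X0 W n ⊆ ballSet G X0 (r * N)) := by
  constructor
  · rintro ⟨N, hN, hconst⟩
    refine ⟨N, hN, fun n => ?_⟩
    rcases Nat.le_total n N with h | h
    · exact (fireSet_subset_ballSet G r X0 W n).trans
        (ballSet_mono G X0 (Nat.mul_le_mul_left r h))
    · rw [hconst n h]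
      exact fireSet_subset_ballSet G r X0 W N
  · rintro ⟨N, -, hsub⟩
    have hB := ballSet_finite G hlf hX0 (r * N)
    obtain ⟨M, hM⟩ := exists_monotone_fireSet_of_subset_finite G r X0 W hB hsub
    obtain ⟨K, hK⟩ :=
      exists_forall_ge_eq_of_monotone_of_subset_finite hB hM fun k => hsub (M + k)
    have hstable : ∀ n, M + K ≤ n → fireSet G r X0 W n = fireSet G r X0 W (M + K) := by
      intro n hn
      obtain ⟨k, rfl⟩ := Nat.exists_eq_add_of_le hn
      rw [add_assoc]
      exact hK _ (Nat.le_add_right K k)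
    exact ⟨M + K + 1, Nat.succ_pos _,
      fun n hn => (hstable n (by omega)).trans (hstable _ (Nat.le_succ _)).symm⟩

/-- for a locally finite graph, the fire is eventually constant iff the fire stays
within some ball `B_G(X_0, r·N)`. -/
theorem stmt11 {V : Type*} (G : SimpleGraph V) (hlf : LocallyFiniteGraph G)
    (r : ℕ) (hr : 1 ≤ r) (X0 : Set V) (hX0 : X0.Finite) (W : ℕ → Set V) :
    (∃ N : ℕ, 0 < N ∧ ∀ n, N ≤ n → fireSet G r X0 W n = fireSet G r X0 W N) ↔
    (∃ N : ℕ, 0 < N ∧ ∀ n, fireSet G r X0 W n ⊆ ballSet G X0 (r * N)) :=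
  stmt11_general G hlf r X0 hX0 W

end Firefighter
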